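/- Let H be a finite hypergroup. If the quotient H//Z(H) of H over its center is weakly nilpotent, then H is weakly nilpotent (and conversely). -/

import Mathlib

/-- A hypergroup: a set with a hypermultiplication, identity and involution
satisfying (H1), (H2), (H3). -/
structure Hypergroup (H : Type*) where
  hmul : H → H → Set H
  one : H
  star : H → H
  assoc : ∀ p q r : H, (⋃ x ∈ hmul q r, hmul p x) = ⋃ x ∈ hmul p q, hmul x r
  hmul_one : ∀ s : H, hmul s one = {s}
  inv_left : ∀ p q r : H, r ∈ hmul p q → q ∈ hmul (star p) r
  inv_right : ∀ p q r : H, r ∈ hmul p q → p ∈ hmul r (star q)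

namespace Hypergroup

variable {H : Type*} (G : Hypergroup H)

/-- Complex (set) product: `AB = ⋃_{a ∈ A, b ∈ B} ab`. -/
def smul (A B : Set H) : Set H := ⋃ a ∈ A, ⋃ b ∈ B, G.hmul a b

/-- `A* = { a* | a ∈ A }`. -/
def sstar (A : Set H) : Set H := G.star '' A

/-- A nonempty subset `F` is closed if `F*F ⊆ F`. -/
def IsClosed (F : Set H) : Prop := F.Nonempty ∧ G.smul (G.sstar F) F ⊆ F

/-- `F` is normal in `K`: `Fk ⊆ kF` for all `k ∈ K`. -/
def IsNormalIn (F K : Set H) : Prop := ∀ k ∈ K, G.smul F {k} ⊆ G.smul {k} F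

/-- `F` is strongly normal in `K`: `k*Fk ⊆ F` for all `k ∈ K`. -/
def IsStronglyNormalIn (F K : Set H) : Prop :=
  ∀ k ∈ K, G.smul (G.smul {G.star k} F) {k} ⊆ F

/-- An element `s` is thin if `s*s = {1}`. -/
def IsThinElem (s : H) : Prop := G.hmul (G.star s) s = {G.one}

/-- A hypergroup is thin if all elements are thin. -/
def IsThin : Prop := ∀ s : H, G.IsThinElem s

/-- The center `Z(H) = {h | hx = xh for all x, h*h = {1}}`. -/
def center : Set H :=
  {h | (∀ x : H, G.hmul h x = G.hmul x h) ∧ G.hmul (G.star h) h = {G.one}}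

/-- The class `h^F := FhF`. -/
def cls (F : Set H) (h : H) : Set H := G.smul (G.smul F {h}) F

/-- The quotient set `H//F := { h^F | h ∈ H }`. -/
def quotSet (F : Set H) : Set (Set H) := Set.range (G.cls F)

/-- The class `h^F` as an element of `H//F`. -/
def qcls (F : Set H) (h : H) : G.quotSet F := ⟨G.cls F h, h, rfl⟩

/-- The full preimage in `H` of the center of the quotient `H//T`:
`{h | h^T ∈ Z(H//T)}`, i.e. `h^T` commutes with all classes `y^T` and
`(h^T)*(h^T) = {1^T} = {T}`. -/
def qCenterPre (T : Set H) : Set H :=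
  {h | (∀ y : H, G.cls T '' (G.smul (G.smul {h} T) {y}) =
          G.cls T '' (G.smul (G.smul {y} T) {h})) ∧
       G.cls T '' (G.smul (G.smul {G.star h} T) {h}) = {T}}

/-- The upper central series: `Z₀(H) = {1}`, and `Zᵢ₊₁(H)` is the full preimage
of `Z(H//Zᵢ(H))`, i.e. `Zᵢ₊₁(H)//Zᵢ(H) = Z(H//Zᵢ(H))`. -/
def upperCentral : ℕ → Set H
  | 0 => {G.one}
  | n + 1 => G.qCenterPre (upperCentral n)

/-- A hypergroup is weakly nilpotent if `Zₙ(H) = H` for some `n`. -/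
def WeaklyNilpotent : Prop := ∃ n : ℕ, G.upperCentral n = Set.univ

/-- `F` is subnormal in `K` via a chain of successively normal closed subsets. -/
def IsSubnormalIn (F K : Set H) : Prop :=
  ∃ n : ℕ, ∃ C : ℕ → Set H, C 0 = F ∧ C n = K ∧
    ∀ i < n, C i ⊆ C (i + 1) ∧ G.IsClosed (C (i + 1)) ∧ G.IsNormalIn (C i) (C (i + 1))

/-- The quotient `K//N` is thin: `(k^N)*(k^N) = {1^N}` for all `k ∈ K`. -/
def QuotThin (N K : Set H) : Prop :=
  ∀ k ∈ K, G.cls N '' (G.smul (G.smul {G.star k} N) {k}) = {N}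

/-- A residually-thin chain from `{1}` to `K`. -/
def RTChainOn (K : Set H) (n : ℕ) (C : ℕ → Set H) : Prop :=
  C 0 = {G.one} ∧ C n = K ∧
    ∀ i < n, C i ⊆ C (i + 1) ∧ G.IsClosed (C (i + 1)) ∧ G.QuotThin (C i) (C (i + 1))

/-- The valency `n_K = ∏ |Cᵢ₊₁//Cᵢ|` computed along some RT chain for `K`. -/
def HasValencyOn (K : Set H) (m : ℕ) : Prop :=
  ∃ n C, G.RTChainOn K n C ∧
    m = ∏ i ∈ Finset.range n, Nat.card (G.cls (C i) '' C (i + 1))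

/-- A closed `p`-subset: a closed subset whose valency is a power of `p`. -/
def PSubsetOn (p : ℕ) (K : Set H) : Prop :=
  G.IsClosed K ∧ ∃ m k : ℕ, G.HasValencyOn K m ∧ m = p ^ k

/-- `h` is `p`-valenced in `K`: for every subnormal closed `p`-subset `U` of `K`
such that `(h*)^U h^U` consists of thin elements of the quotient,
`n_{(h*)^U h^U} = |(h*)^U h^U|` is a power of `p`. -/
def PValencedElemOn (p : ℕ) (K : Set H) (h : H) : Prop :=
  ∀ U : Set H, G.IsClosed U → U ⊆ K → G.IsSubnormalIn U K → G.PSubsetOn p U →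
    (∀ x ∈ G.smul (G.smul {G.star h} U) {h},
      G.cls U '' (G.smul (G.smul {G.star x} U) {x}) = {U}) →
    ∃ k : ℕ, Nat.card (G.cls U '' (G.smul (G.smul {G.star h} U) {h})) = p ^ k

/-- `K` is `p`-valenced if all its elements are. -/
def PValencedOn (p : ℕ) (K : Set H) : Prop := ∀ h ∈ K, G.PValencedElemOn p K h

end Hypergroup

/-! The projection `π : H → H//Z(H)` matches the upper central series of the quotient with the
shifted series of `H`: `Zₙ₊₁(H) = π⁻¹ Zₙ(H//Z(H))`. Central elements are thin and commute with
everything, so `Z(H)` behaves like a normal subgroup: `π a = π b` iff `a ∈ Z(H) b`. Hence `π` is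
injective on `Z(H)`-saturated subsets `S = Z(H) S`, and for saturated `T` it carries the products
`aTb` and classes `h^T` of `H` to those of `π T` in the quotient, so the conditions defining
`Zᵢ₊₁(H)` and `Zᵢ(H//Z(H))` correspond under `π`. -/

namespace Hypergroup

variable {H : Type*} (G : Hypergroup H)

section Basic

lemma mem_smul {A B : Set H} {u : H} :
    u ∈ G.smul A B ↔ ∃ a ∈ A, ∃ b ∈ B, u ∈ G.hmul a b := by
  simp [smul]

lemma singleton_smul_singleton (a b : H) : G.smul {a} {b} = G.hmul a b := by
  ext u; simp [smul]

lemma smul_mono {A A' B B' : Set H} (hA : A ⊆ A') (hB : B ⊆ B') :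
    G.smul A B ⊆ G.smul A' B' :=
  Set.biUnion_mono hA fun _ _ => Set.biUnion_mono hB fun _ _ => le_rfl

lemma smul_assoc (A B C : Set H) : G.smul (G.smul A B) C = G.smul A (G.smul B C) := by
  ext u
  simp only [G.mem_smul]
  constructor
  · rintro ⟨x, ⟨a, ha, b, hb, hx⟩, c, hc, hu⟩
    obtain ⟨y, hy, hu⟩ := Set.mem_iUnion₂.mp (G.assoc a b c ▸ Set.mem_biUnion hx hu)
    exact ⟨a, ha, y, ⟨b, hb, c, hc, hy⟩, hu⟩
  · rintro ⟨a, ha, y, ⟨b, hb, c, hc, hy⟩, hu⟩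
    obtain ⟨x, hx, hu⟩ := Set.mem_iUnion₂.mp (G.assoc a b c ▸ Set.mem_biUnion hy hu)
    exact ⟨x, ⟨a, ha, b, hb, hx⟩, c, hc, hu⟩

lemma one_mem_star_hmul (s : H) : G.one ∈ G.hmul (G.star s) s :=
  G.inv_left s G.one s (by rw [G.hmul_one]; rfl)

lemma star_star (s : H) : G.star (G.star s) = s := by
  have h := G.inv_left (G.star s) s G.one (G.one_mem_star_hmul s)
  rw [G.hmul_one] at h
  exact h.symm

lemma one_mem_hmul_star (s : H) : G.one ∈ G.hmul s (G.star s) := by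
  simpa only [G.star_star] using G.one_mem_star_hmul (G.star s)

lemma star_one : G.star G.one = G.one := by
  simpa only [G.hmul_one, Set.mem_singleton_iff, eq_comm] using G.one_mem_star_hmul G.one

lemma star_mem_hmul_star {p q u : H} (h : u ∈ G.hmul p q) :
    G.star u ∈ G.hmul (G.star q) (G.star p) :=
  G.inv_left q _ _ (G.inv_right _ u q (G.inv_left p q u h))

lemma one_hmul (x : H) : G.hmul G.one x = {x} := by
  ext u
  constructor
  · intro hu
    have h := G.inv_left u _ _ (G.inv_right G.one x u hu)
    rw [G.hmul_one, Set.mem_singleton_iff] at h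
    rw [Set.mem_singleton_iff, ← G.star_star u, ← h, G.star_star]
  · rintro rfl
    simpa only [G.star_star] using G.inv_right u (G.star u) G.one (G.one_mem_hmul_star u)

lemma hmul_nonempty (p q : H) : (G.hmul p q).Nonempty := by
  have hp : p ∈ ⋃ x ∈ G.hmul q (G.star q), G.hmul p x :=
    Set.mem_biUnion (G.one_mem_hmul_star q) (by rw [G.hmul_one]; rfl)
  rw [G.assoc] at hp
  obtain ⟨x, hx, -⟩ := Set.mem_iUnion₂.mp hp
  exact ⟨x, hx⟩

lemma smul_nonempty {A B : Set H} (hA : A.Nonempty) (hB : B.Nonempty) :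
    (G.smul A B).Nonempty := by
  obtain ⟨a, ha⟩ := hA
  obtain ⟨b, hb⟩ := hB
  obtain ⟨u, hu⟩ := G.hmul_nonempty a b
  exact ⟨u, G.mem_smul.mpr ⟨a, ha, b, hb, hu⟩⟩

lemma smul_singleton_one (A : Set H) : G.smul A {G.one} = A := by
  ext u; simp [smul, G.hmul_one]

lemma singleton_one_smul (A : Set H) : G.smul {G.one} A = A := by
  ext u; simp [smul, G.one_hmul]

end Basic

section Center

lemma one_mem_center : G.one ∈ G.center :=
  ⟨fun x => by rw [G.one_hmul, G.hmul_one], by rw [G.star_one, G.one_hmul]⟩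

variable {G}

lemma hmul_star_of_mem_center {z : H} (hz : z ∈ G.center) :
    G.hmul z (G.star z) = {G.one} :=
  hz.1 (G.star z) ▸ hz.2

lemma star_mem_center {z : H} (hz : z ∈ G.center) : G.star z ∈ G.center := by
  refine ⟨fun x => ?_, by rw [G.star_star]; exact hmul_star_of_mem_center hz⟩
  ext u
  constructor
  · intro hu
    have h := G.star_mem_hmul_star hu
    rw [G.star_star, ← hz.1] at h
    simpa only [G.star_star] using G.star_mem_hmul_star h
  · intro hu
    have h := G.star_mem_hmul_star hu
    rw [G.star_star, hz.1] at h
    simpa only [G.star_star] using G.star_mem_hmul_star h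

lemma hmul_eq_singleton_of_mem_center {z a u : H} (hz : z ∈ G.center)
    (hu : u ∈ G.hmul z a) : G.hmul z a = {u} := by
  refine Set.eq_singleton_iff_nonempty_unique_mem.mpr ⟨⟨u, hu⟩, fun t ht => ?_⟩
  have h : t ∈ G.smul {z} (G.smul {G.star z} {u}) := by
    rw [G.singleton_smul_singleton]
    exact G.mem_smul.mpr ⟨z, rfl, a, G.inv_left z a u hu, ht⟩
  rwa [← G.smul_assoc, G.singleton_smul_singleton, hmul_star_of_mem_center hz,
    G.singleton_one_smul] at h

lemma hmul_subset_center {z w : H} (hz : z ∈ G.center) (hw : w ∈ G.center) :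
    G.hmul z w ⊆ G.center := by
  intro u hu
  -- `zw = {u}`: so `u` commutes as `z` and `w` do, and `u*u ⊆ (w*z*)(zw) = {1}`.
  have hzw := hmul_eq_singleton_of_mem_center hz hu
  refine ⟨fun x => ?_, ?_⟩
  · have h : G.smul (G.hmul z w) {x} = G.smul {x} (G.hmul z w) := by
      rw [← G.singleton_smul_singleton z w, G.smul_assoc, G.singleton_smul_singleton w x,
        hw.1 x, ← G.singleton_smul_singleton x w, ← G.smul_assoc,
        G.singleton_smul_singleton z x, hz.1 x, ← G.singleton_smul_singleton x z, G.smul_assoc]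
    rwa [hzw, G.singleton_smul_singleton, G.singleton_smul_singleton] at h
  · have h : G.smul (G.hmul (G.star w) (G.star z)) (G.hmul z w) = {G.one} := by
      rw [← G.singleton_smul_singleton (G.star w), ← G.singleton_smul_singleton z w,
        G.smul_assoc, ← G.smul_assoc {G.star z}, G.singleton_smul_singleton (G.star z) z,
        hz.2, G.singleton_one_smul, G.singleton_smul_singleton, hw.2]
    have hsub : G.hmul (G.star u) u ⊆ {G.one} := by
      rw [← h, ← G.singleton_smul_singleton]
      exact G.smul_mono (Set.singleton_subset_iff.mpr (G.star_mem_hmul_star hu))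
        (Set.singleton_subset_iff.mpr hu)
    exact (Set.subset_singleton_iff_eq.mp hsub).resolve_left
      (G.hmul_nonempty _ _).ne_empty

variable (G)

lemma center_smul_comm (A : Set H) : G.smul G.center A = G.smul A G.center := by
  ext u
  simp only [G.mem_smul]
  constructor
  · rintro ⟨z, hz, a, ha, hu⟩
    exact ⟨a, ha, z, hz, hz.1 a ▸ hu⟩
  · rintro ⟨a, ha, z, hz, hu⟩
    exact ⟨z, hz, a, ha, (hz.1 a).symm ▸ hu⟩

lemma subset_center_smul (A : Set H) : A ⊆ G.smul G.center A := fun a ha =>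
  G.mem_smul.mpr ⟨G.one, G.one_mem_center, a, ha, by rw [G.one_hmul]; rfl⟩

lemma center_smul_center : G.smul G.center G.center = G.center := by
  refine Set.Subset.antisymm ?_ (G.subset_center_smul _)
  intro u hu
  obtain ⟨z, hz, w, hw, hu⟩ := G.mem_smul.mp hu
  exact hmul_subset_center hz hw hu

end Center

lemma qcls_surjective (F : Set H) : Function.Surjective (G.qcls F) := by
  rintro ⟨S, h, rfl⟩
  exact ⟨h, rfl⟩

lemma cls_singleton_one (x : H) : G.cls {G.one} x = {x} := by
  rw [cls, G.smul_singleton_one, G.singleton_one_smul]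

lemma cls_univ (x : H) : G.cls Set.univ x = Set.univ := by
  refine Set.eq_univ_of_forall fun u => ?_
  obtain ⟨a, ha⟩ := G.hmul_nonempty u (G.star x)
  have hu : u ∈ G.hmul a x := by simpa only [G.star_star] using G.inv_right u (G.star x) a ha
  refine G.mem_smul.mpr ⟨u, ?_, G.one, trivial, by rw [G.hmul_one]; rfl⟩
  exact G.mem_smul.mpr ⟨a, trivial, x, rfl, hu⟩

lemma qCenterPre_singleton_one : G.qCenterPre {G.one} = G.center := by
  have hcls : G.cls {G.one} = fun x => {x} := funext G.cls_singleton_one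
  have hinj : Function.Injective (Set.image fun x : H => ({x} : Set H)) :=
    Set.image_injective.mpr Set.singleton_injective
  have hone : ({{G.one}} : Set (Set H)) = (fun x : H => ({x} : Set H)) '' {G.one} :=
    Set.image_singleton.symm
  ext h
  simp only [qCenterPre, center, Set.mem_ofPred_eq, hcls, G.smul_singleton_one,
    G.singleton_smul_singleton, hone, hinj.eq_iff]

lemma qCenterPre_univ : G.qCenterPre Set.univ = Set.univ := by
  have himg : ∀ S : Set H, S.Nonempty → G.cls Set.univ '' S = {Set.univ} := fun S hS => by
    rw [funext G.cls_univ]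
    exact hS.image_const _
  have hne : ∀ a b : H, (G.smul (G.smul {a} Set.univ) {b}).Nonempty := fun a b =>
    G.smul_nonempty (G.smul_nonempty ⟨a, rfl⟩ ⟨G.one, trivial⟩) ⟨b, rfl⟩
  exact Set.eq_univ_of_forall fun h =>
    ⟨fun y => by rw [himg _ (hne h y), himg _ (hne y h)], himg _ (hne _ h)⟩

section CenterClasses

local notation "π" => G.qcls G.center

lemma cls_center (h : H) : G.cls G.center h = G.smul G.center {h} := by
  rw [cls, G.smul_assoc, ← G.center_smul_comm {h}, ← G.smul_assoc, G.center_smul_center]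

lemma center_smul_subset_of_mem {a b : H} (h : a ∈ G.smul G.center {b}) :
    G.smul G.center {a} ⊆ G.smul G.center {b} :=
  calc G.smul G.center {a} ⊆ G.smul G.center (G.smul G.center {b}) :=
        G.smul_mono le_rfl (Set.singleton_subset_iff.mpr h)
    _ = G.smul G.center {b} := by rw [← G.smul_assoc, G.center_smul_center]

lemma mem_center_smul_singleton_symm {a b : H} (h : a ∈ G.smul G.center {b}) :
    b ∈ G.smul G.center {a} := by
  obtain ⟨z, hz, b', rfl, hab⟩ := G.mem_smul.mp h
  exact G.mem_smul.mpr ⟨G.star z, star_mem_center hz, a, rfl, G.inv_left z b' a hab⟩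

lemma qcls_center_eq_iff {a b : H} : π a = π b ↔ a ∈ G.smul G.center {b} := by
  rw [Subtype.ext_iff]
  change G.cls G.center a = G.cls G.center b ↔ _
  rw [G.cls_center, G.cls_center]
  refine ⟨fun h => h ▸ G.subset_center_smul {a} rfl, fun h => ?_⟩
  exact (G.center_smul_subset_of_mem h).antisymm
    (G.center_smul_subset_of_mem (G.mem_center_smul_singleton_symm h))

lemma preimage_image_qcls_center (S : Set H) : π ⁻¹' (π '' S) = G.smul G.center S := by
  ext u
  constructor
  · rintro ⟨t, ht, htu⟩
    obtain ⟨z, hz, t', rfl, hu⟩ :=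
      G.mem_smul.mp (G.mem_center_smul_singleton_symm (G.qcls_center_eq_iff.mp htu))
    exact G.mem_smul.mpr ⟨z, hz, t', ht, hu⟩
  · intro hu
    obtain ⟨z, hz, t, ht, hu⟩ := G.mem_smul.mp hu
    exact ⟨t, ht, (G.qcls_center_eq_iff.mpr (G.mem_smul.mpr ⟨z, hz, t, rfl, hu⟩)).symm⟩

lemma injOn_image_qcls_center : Set.InjOn (Set.image π) {S | G.smul G.center S = S} :=
  fun A hA B hB h =>
    calc A = G.smul G.center A := hA.symm
      _ = G.smul G.center B := by rw [← preimage_image_qcls_center, h, preimage_image_qcls_center]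
      _ = B := hB

lemma center_smul_preimage_qcls_center (Q' : Set (G.quotSet G.center)) :
    G.smul G.center (π ⁻¹' Q') = π ⁻¹' Q' := by
  rw [← preimage_image_qcls_center, Set.preimage_image_preimage]

lemma center_smul_cls {T : Set H} (hT : G.smul G.center T = T) (x : H) :
    G.smul G.center (G.cls T x) = G.cls T x := by
  rw [cls, ← G.smul_assoc, ← G.smul_assoc, hT]

end CenterClasses

section CenterQuotient

local notation "π" => G.qcls G.center

def IsCenterQuotientMul (Q : Hypergroup (G.quotSet G.center)) : Prop :=
  ∀ a b : H, Q.hmul (π a) (π b) = π '' G.smul (G.smul {a} G.center) {b}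

variable {G} {Q : Hypergroup (G.quotSet G.center)}

lemma IsCenterQuotientMul.smul_image (hQ : G.IsCenterQuotientMul Q) (A B : Set H) :
    Q.smul (π '' A) (π '' B) = π '' G.smul (G.smul A G.center) B := by
  ext X
  simp only [Q.mem_smul, Set.exists_mem_image]
  simp only [hQ _ _, Set.mem_image, G.mem_smul, Set.mem_singleton_iff, exists_eq_left]
  constructor
  · rintro ⟨a, ha, b, hb, u, ⟨c, ⟨z, hz, hc⟩, hu⟩, rfl⟩
    exact ⟨u, ⟨c, ⟨a, ha, z, hz, hc⟩, b, hb, hu⟩, rfl⟩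
  · rintro ⟨u, ⟨c, ⟨a, ha, z, hz, hc⟩, b, hb, hu⟩, rfl⟩
    exact ⟨a, ha, b, hb, u, ⟨c, ⟨z, hz, hc⟩, hu⟩, rfl⟩

lemma IsCenterQuotientMul.cls_image (hQ : G.IsCenterQuotientMul Q) {T : Set H}
    (hT : G.smul G.center T = T) (x : H) : Q.cls (π '' T) (π x) = π '' G.cls T x := by
  have hTZ : G.smul T G.center = T := (G.center_smul_comm T).symm.trans hT
  rw [cls, ← Set.image_singleton, hQ.smul_image, hQ.smul_image, hTZ, G.smul_assoc _ G.center,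
    hT, cls]

lemma IsCenterQuotientMul.smul_smul_image (hQ : G.IsCenterQuotientMul Q) {T : Set H}
    (hT : G.smul G.center T = T) (a b : H) :
    Q.smul (Q.smul {π a} (π '' T)) {π b} = π '' G.smul (G.smul {a} T) {b} := by
  have hTZ : G.smul T G.center = T := (G.center_smul_comm T).symm.trans hT
  rw [← Set.image_singleton (f := π), ← Set.image_singleton (f := π), hQ.smul_image,
    hQ.smul_image, G.smul_assoc {a} G.center T, hT, G.smul_assoc {a} T G.center, hTZ]

lemma IsCenterQuotientMul.qCenterPre_eq_preimage (hQ : G.IsCenterQuotientMul Q)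
    (hstar : ∀ h : H, Q.star (π h) = π (G.star h)) {T : Set H}
    (hT : G.smul G.center T = T) : G.qCenterPre T = π ⁻¹' Q.qCenterPre (π '' T) := by
  have hcls : ∀ a b, Q.cls (π '' T) '' Q.smul (Q.smul {π a} (π '' T)) {π b} =
      Set.image π '' (G.cls T '' G.smul (G.smul {a} T) {b}) := fun a b => by
    simp only [hQ.smul_smul_image hT, Set.image_image, hQ.cls_image hT]
  have hsat : ∀ S, G.cls T '' S ⊆ {S | G.smul G.center S = S} :=
    fun S => Set.image_subset_iff.mpr fun x _ => G.center_smul_cls hT x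
  have hsingle : ({π '' T} : Set (Set (G.quotSet G.center))) = Set.image π '' {T} :=
    Set.image_singleton.symm
  have inj := G.injOn_image_qcls_center
  ext h
  simp only [qCenterPre, Set.mem_preimage, Set.mem_ofPred_eq, hstar,
    (G.qcls_surjective _).forall, hcls, hsingle, inj.image_eq_image_iff (hsat _) (hsat _),
    inj.image_eq_image_iff (hsat _) (Set.singleton_subset_iff.mpr hT)]

lemma IsCenterQuotientMul.upperCentral_succ_eq_preimage (hQ : G.IsCenterQuotientMul Q)
    (hone : Q.one = π G.one) (hstar : ∀ h : H, Q.star (π h) = π (G.star h)) (n : ℕ) :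
    G.upperCentral (n + 1) = π ⁻¹' Q.upperCentral n := by
  induction n with
  | zero =>
    change G.qCenterPre {G.one} = π ⁻¹' {Q.one}
    rw [G.qCenterPre_singleton_one, hone, ← Set.image_singleton, G.preimage_image_qcls_center,
      G.smul_singleton_one]
  | succ n ih =>
    have hsat : G.smul G.center (G.upperCentral (n + 1)) = G.upperCentral (n + 1) := by
      rw [ih]; exact G.center_smul_preimage_qcls_center _
    change G.qCenterPre (G.upperCentral (n + 1)) = π ⁻¹' Q.qCenterPre (Q.upperCentral n)
    rw [hQ.qCenterPre_eq_preimage hstar hsat, ih, Set.image_preimage_eq _ (G.qcls_surjective _)]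

end CenterQuotient

end Hypergroup

theorem quot_center_weaklyNilpotent_iff_general {H : Type*} (G : Hypergroup H)
    (Q : Hypergroup (G.quotSet G.center))
    (hmul : ∀ a b : H, Q.hmul (G.qcls G.center a) (G.qcls G.center b) =
      {x : G.quotSet G.center |
        ∃ y ∈ G.smul (G.smul {a} G.center) {b}, x = G.qcls G.center y})
    (hone : Q.one = G.qcls G.center G.one)
    (hstar : ∀ h : H, Q.star (G.qcls G.center h) = G.qcls G.center (G.star h)) :
    Q.WeaklyNilpotent ↔ G.WeaklyNilpotent := by
  have hQ : G.IsCenterQuotientMul Q := fun a b => by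
    rw [hmul]; ext; simp [eq_comm]
  have hZ := hQ.upperCentral_succ_eq_preimage hone hstar
  constructor
  · rintro ⟨n, hn⟩
    exact ⟨n + 1, by rw [hZ, hn, Set.preimage_univ]⟩
  · rintro ⟨n, hn⟩
    refine ⟨n, Set.preimage_injective.mpr (G.qcls_surjective _) ?_⟩
    rw [← hZ, Set.preimage_univ]
    change G.qCenterPre (G.upperCentral n) = _
    rw [hn, G.qCenterPre_univ]

/-- for a finite hypergroup `H`, the quotient `H//Z(H)` is
weakly nilpotent iff `H` is weakly nilpotent. -/
theorem quot_center_weaklyNilpotent_iff {H : Type*} [Finite H] (G : Hypergroup H)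
    (Q : Hypergroup (G.quotSet G.center))
    (hmul : ∀ a b : H, Q.hmul (G.qcls G.center a) (G.qcls G.center b) =
      {x : G.quotSet G.center |
        ∃ y ∈ G.smul (G.smul {a} G.center) {b}, x = G.qcls G.center y})
    (hone : Q.one = G.qcls G.center G.one)
    (hstar : ∀ h : H, Q.star (G.qcls G.center h) = G.qcls G.center (G.star h)) :
    Q.WeaklyNilpotent ↔ G.WeaklyNilpotent :=
  quot_center_weaklyNilpotent_iff_general G Q hmul hone hstar
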